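/- Let X ∈ ℝ^{N×N} be symmetric positive semidefinite of rank r with eigenvalues λ₁ ≥ ⋯ ≥ λ_r > 0, let 1 ≤ k ≤ r, let W_k, Λ_k, U* = W_k Λ_k^{1/2} be as usual, and set L = ‖U*U*ᵀ‖_F. Let B₁,…,B_M ∈ ℝ^{N×N}, set A_m = (B_m + B_mᵀ)/2, and suppose that for every Z ∈ ℝ^{N×N} with rank(Z) ≤ r+k one has (1−δ)‖Z‖_F² ≤ Σ_{m=1}^M ⟨B_m, Z⟩² ≤ (1+δ)‖Z‖_F². Let η > 0 and suppose δ ≤ η / (2((16/7)√k L + (8/7)L + ‖X‖_F)). Then for every U ∈ ℝ^{N×k} with full column rank and ‖UUᵀ‖_F ≤ (8/7)L, and every D ∈ ℝ^{N×k} with ‖D‖_F = 1, one has |(1/2)Σ_{m=1}^M ⟨A_m, UDᵀ + DUᵀ⟩² + ⟨Σ_{m=1}^M ⟨A_m, UUᵀ − X⟩ A_m, DDᵀ⟩ − (1/2)‖UDᵀ + DUᵀ‖_F² − ⟨UUᵀ − X, DDᵀ⟩| ≤ η/2. -/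

import Mathlib

/-!
The gap between the two Hessian forms splits into three RIP deviations: the quadratic one at
`S = U Dᵀ + D Uᵀ` (rank `≤ 2k`), and the bilinear ones `Σ ⟨B_m, Z⟩⟨B_m, D Dᵀ⟩ - ⟨Z, D Dᵀ⟩` for
`Z = U Uᵀ` and `Z = X`; replacing `B_m` by its symmetrization `A_m` is invisible against
symmetric matrices. Polarization turns RIP of order `s` into the bound `δ ‖Z₁‖ ‖Z₂‖` on the
bilinear deviation whenever `rank Z₁ + rank Z₂ ≤ s`. With `‖D‖ = 1` the three deviations are at
most `2δ‖U‖²`, `δ‖U Uᵀ‖` and `δ‖X‖`, and `‖U‖² = tr (Uᵀ U) ≤ √k ‖Uᵀ U‖ = √k ‖U Uᵀ‖`.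
-/

open Matrix

/-- Frobenius norm of a real matrix. -/
noncomputable def frob {m n : Type*} [Fintype m] [Fintype n] (M : Matrix m n ℝ) : ℝ :=
  Real.sqrt (∑ i, ∑ j, (M i j) ^ 2)

/-- Trace (entrywise) inner product of two real matrices. -/
noncomputable def mip {m n : Type*} [Fintype m] [Fintype n] (A B : Matrix m n ℝ) : ℝ :=
  ∑ i, ∑ j, A i j * B i j

open scoped Matrix.Norms.Frobenius

section Frobenius

variable {m n p : Type*} [Fintype m] [Fintype n] [Fintype p]

theorem frob_eq_norm (M : Matrix m n ℝ) : frob M = ‖M‖ := by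
  simp only [frob, frobenius_norm_def, Real.norm_eq_abs, Real.rpow_two, sq_abs,
    Real.sqrt_eq_rpow, one_div]

theorem frob_nonneg (M : Matrix m n ℝ) : 0 ≤ frob M := Real.sqrt_nonneg _

theorem frob_eq_zero_iff {M : Matrix m n ℝ} : frob M = 0 ↔ M = 0 := by
  rw [frob_eq_norm, norm_eq_zero]

theorem mip_comm (P Q : Matrix m n ℝ) : mip P Q = mip Q P := by
  simp only [mip, mul_comm]

theorem mip_add_left (P Q R : Matrix m n ℝ) : mip (P + Q) R = mip P R + mip Q R := by
  simp only [mip, Matrix.add_apply, add_mul, Finset.sum_add_distrib]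

theorem mip_add_right (P Q R : Matrix m n ℝ) : mip P (Q + R) = mip P Q + mip P R := by
  rw [mip_comm, mip_add_left, mip_comm Q, mip_comm R]

theorem mip_sub_left (P Q R : Matrix m n ℝ) : mip (P - Q) R = mip P R - mip Q R := by
  simp only [mip, Matrix.sub_apply, sub_mul, Finset.sum_sub_distrib]

theorem mip_sub_right (P Q R : Matrix m n ℝ) : mip P (Q - R) = mip P Q - mip P R := by
  rw [mip_comm, mip_sub_left, mip_comm Q, mip_comm R]

theorem mip_smul_left (c : ℝ) (P Q : Matrix m n ℝ) : mip (c • P) Q = c * mip P Q := by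
  simp only [mip, Matrix.smul_apply, smul_eq_mul, mul_assoc, Finset.mul_sum]

theorem mip_smul_right (c : ℝ) (P Q : Matrix m n ℝ) : mip P (c • Q) = c * mip P Q := by
  rw [mip_comm, mip_smul_left, mip_comm]

theorem mip_transpose_left (P : Matrix n m ℝ) (Q : Matrix m n ℝ) : mip Pᵀ Q = mip P Qᵀ := by
  simp only [mip, transpose_apply]
  exact Finset.sum_comm

theorem mip_eq_trace (P Q : Matrix m n ℝ) : mip P Q = (Pᵀ * Q).trace := by
  rw [← vec_dotProduct_vec]
  simp only [mip, dotProduct, vec, ← Finset.univ_product_univ, Finset.sum_product]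
  exact Finset.sum_comm

theorem mip_sum_left {ι : Type*} (s : Finset ι) (P : ι → Matrix m n ℝ) (Q : Matrix m n ℝ) :
    mip (∑ i ∈ s, P i) Q = ∑ i ∈ s, mip (P i) Q := by
  simp only [mip_eq_trace, transpose_sum, Matrix.sum_mul, trace_sum]

theorem mip_self (M : Matrix m n ℝ) : mip M M = frob M ^ 2 := by
  rw [frob, Real.sq_sqrt (by positivity)]
  simp only [mip, sq]

theorem frob_smul_add_smul_sq (a b : ℝ) (P Q : Matrix m n ℝ) :
    frob (a • P + b • Q) ^ 2 = a ^ 2 * frob P ^ 2 + 2 * a * b * mip P Q + b ^ 2 * frob Q ^ 2 := by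
  simp only [← mip_self, mip_add_left, mip_add_right, mip_smul_left, mip_smul_right, mip_comm Q P]
  ring

theorem frob_mul_transpose_le (P : Matrix m p ℝ) (Q : Matrix n p ℝ) :
    frob (P * Qᵀ) ≤ frob P * frob Q := by
  simpa only [frob_eq_norm, frobenius_norm_transpose] using frobenius_norm_mul P Qᵀ

theorem frob_mul_transpose_add_le (U D : Matrix m p ℝ) :
    frob (U * Dᵀ + D * Uᵀ) ≤ 2 * frob U * frob D := by
  calc frob (U * Dᵀ + D * Uᵀ) ≤ frob (U * Dᵀ) + frob (D * Uᵀ) := by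
        simpa only [frob_eq_norm] using norm_add_le _ _
    _ ≤ frob U * frob D + frob D * frob U :=
        add_le_add (frob_mul_transpose_le U D) (frob_mul_transpose_le D U)
    _ = 2 * frob U * frob D := by ring

theorem sq_trace_le_card_mul_frob_sq (G : Matrix n n ℝ) :
    G.trace ^ 2 ≤ Fintype.card n * frob G ^ 2 := by
  calc G.trace ^ 2 ≤ Fintype.card n * ∑ i, G i i ^ 2 := sq_sum_le_card_mul_sum_sq
    _ ≤ Fintype.card n * frob G ^ 2 := by
        rw [frob, Real.sq_sqrt (by positivity)]
        gcongr with i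
        exact Finset.single_le_sum (fun j _ => sq_nonneg (G i j)) (Finset.mem_univ i)

theorem frob_transpose_mul_self (U : Matrix m n ℝ) : frob (Uᵀ * U) = frob (U * Uᵀ) := by
  rw [← sq_eq_sq₀ (frob_nonneg _) (frob_nonneg _), ← mip_self, ← mip_self, mip_eq_trace,
    mip_eq_trace]
  simp only [transpose_mul, transpose_transpose, Matrix.mul_assoc]
  rw [trace_mul_comm, Matrix.mul_assoc, Matrix.mul_assoc]

theorem frob_sq_le_sqrt_card_mul (U : Matrix m n ℝ) :
    frob U ^ 2 ≤ √(Fintype.card n) * frob (U * Uᵀ) := by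
  have htrace : frob U ^ 2 = (Uᵀ * U).trace := by rw [← mip_self, mip_eq_trace]
  rw [← frob_transpose_mul_self, ← Real.sqrt_sq (by positivity : 0 ≤ frob U ^ 2),
    ← Real.sqrt_sq (frob_nonneg (Uᵀ * U)), ← Real.sqrt_mul (by positivity)]
  exact Real.sqrt_le_sqrt (htrace ▸ sq_trace_le_card_mul_frob_sq _)

end Frobenius

section Rank

variable {K m n : Type*} [Field K] [Fintype n]

theorem Matrix.rank_add_le (P Q : Matrix m n K) : (P + Q).rank ≤ P.rank + Q.rank := by
  unfold Matrix.rank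
  rw [mulVecLin_add]
  calc Module.finrank K (LinearMap.range (P.mulVecLin + Q.mulVecLin))
      ≤ Module.finrank K (LinearMap.range P.mulVecLin ⊔ LinearMap.range Q.mulVecLin :
          Submodule K (m → K)) :=
        Submodule.finrank_mono fun _ ⟨v, hv⟩ =>
          hv ▸ Submodule.add_mem_sup ⟨v, rfl⟩ ⟨v, rfl⟩
    _ ≤ _ := Submodule.finrank_add_le_finrank_add_finrank _ _

theorem Matrix.rank_smul_le (c : K) (P : Matrix m n K) : (c • P).rank ≤ P.rank := by
  rcases eq_or_ne c 0 with rfl | hc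
  · simp
  · exact (rank_smul_of_mem_nonZeroDivisors P (mem_nonZeroDivisors_of_ne_zero hc)).le

theorem Matrix.rank_smul_add_smul_le (a b : K) (P Q : Matrix m n K) :
    (a • P + b • Q).rank ≤ P.rank + Q.rank :=
  (rank_add_le _ _).trans (add_le_add (rank_smul_le a P) (rank_smul_le b Q))

end Rank

def HasRIP {ι m n : Type*} [Fintype ι] [Fintype m] [Fintype n] (B : ι → Matrix m n ℝ) (s : ℕ)
    (δ : ℝ) : Prop :=
  ∀ Z : Matrix m n ℝ, Z.rank ≤ s →
    (1 - δ) * frob Z ^ 2 ≤ ∑ i, mip (B i) Z ^ 2 ∧ ∑ i, mip (B i) Z ^ 2 ≤ (1 + δ) * frob Z ^ 2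

namespace HasRIP

variable {ι m n : Type*} [Fintype ι] [Fintype m] [Fintype n] {B : ι → Matrix m n ℝ} {s : ℕ}
  {δ : ℝ}

theorem abs_sum_sq_sub_frob_sq_le (h : HasRIP B s δ) {Z : Matrix m n ℝ} (hZ : Z.rank ≤ s) :
    |∑ i, mip (B i) Z ^ 2 - frob Z ^ 2| ≤ δ * frob Z ^ 2 := by
  obtain ⟨hlow, hup⟩ := h Z hZ
  rw [abs_le]
  constructor <;> linarith

theorem nonneg (h : HasRIP B s δ) {Z : Matrix m n ℝ} (hZ : Z.rank ≤ s) (hZ0 : Z ≠ 0) :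
    0 ≤ δ := by
  have hpos : 0 < frob Z ^ 2 :=
    pow_pos ((frob_nonneg Z).lt_of_ne' (frob_eq_zero_iff.not.mpr hZ0)) 2
  obtain ⟨hlow, hup⟩ := h Z hZ
  nlinarith

theorem abs_sum_mul_sub_mip_le (h : HasRIP B s δ) {Z₁ Z₂ : Matrix m n ℝ}
    (hZ : Z₁.rank + Z₂.rank ≤ s) :
    |∑ i, mip (B i) Z₁ * mip (B i) Z₂ - mip Z₁ Z₂| ≤ δ * (frob Z₁ * frob Z₂) := by
  rcases (mul_nonneg (frob_nonneg Z₁) (frob_nonneg Z₂)).eq_or_lt with hab | hab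
  · rw [← hab, mul_zero]
    rcases mul_eq_zero.mp hab.symm with hZ₁ | hZ₂
    · simp [frob_eq_zero_iff.mp hZ₁, mip]
    · simp [frob_eq_zero_iff.mp hZ₂, mip]
  set a := frob Z₁
  set b := frob Z₂
  -- polarization with weights `b, a`, chosen so that `‖P‖² + ‖Q‖² = 4 (a b)²`
  set P := b • Z₁ + a • Z₂
  set Q := b • Z₁ + (-a) • Z₂
  have hP := h.abs_sum_sq_sub_frob_sq_le ((rank_smul_add_smul_le b a Z₁ Z₂).trans hZ)
  have hQ := h.abs_sum_sq_sub_frob_sq_le ((rank_smul_add_smul_le b (-a) Z₁ Z₂).trans hZ)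
  have hPQ : frob P ^ 2 + frob Q ^ 2 = 4 * (a * b) ^ 2 := by
    simp only [P, Q, frob_smul_add_smul_sq]
    ring
  have hmeas : ∑ i, mip (B i) P ^ 2 - ∑ i, mip (B i) Q ^ 2 =
      4 * (a * b) * ∑ i, mip (B i) Z₁ * mip (B i) Z₂ := by
    rw [← Finset.sum_sub_distrib, Finset.mul_sum]
    refine Finset.sum_congr rfl fun i _ => ?_
    simp only [P, Q, mip_add_right, mip_smul_right]
    ring
  have hfrob : frob P ^ 2 - frob Q ^ 2 = 4 * (a * b) * mip Z₁ Z₂ := by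
    simp only [P, Q, frob_smul_add_smul_sq]
    ring
  have hpolar : 4 * (a * b) * (∑ i, mip (B i) Z₁ * mip (B i) Z₂ - mip Z₁ Z₂) =
      (∑ i, mip (B i) P ^ 2 - frob P ^ 2) - (∑ i, mip (B i) Q ^ 2 - frob Q ^ 2) := by
    linear_combination hfrob - hmeas
  have key : 4 * (a * b) * |∑ i, mip (B i) Z₁ * mip (B i) Z₂ - mip Z₁ Z₂| ≤
      4 * (a * b) * (δ * (a * b)) := by
    rw [← abs_of_pos (by positivity : 0 < 4 * (a * b)), ← abs_mul, hpolar,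
      abs_of_pos (by positivity : 0 < 4 * (a * b))]
    calc _ ≤ |∑ i, mip (B i) P ^ 2 - frob P ^ 2| + |∑ i, mip (B i) Q ^ 2 - frob Q ^ 2| :=
          abs_sub _ _
      _ ≤ δ * frob P ^ 2 + δ * frob Q ^ 2 := add_le_add hP hQ
      _ = 4 * (a * b) * (δ * (a * b)) := by rw [← mul_add, hPQ]; ring
  exact le_of_mul_le_mul_left key (by positivity)

end HasRIP

section Hessian

variable {ι n p : Type*} [Fintype ι] [Fintype n] [Fintype p]

theorem mip_half_smul_add_transpose {Z : Matrix n n ℝ} (hZ : Zᵀ = Z) (P : Matrix n n ℝ) :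
    mip ((1 / 2 : ℝ) • (P + Pᵀ)) Z = mip P Z := by
  rw [mip_smul_left, mip_add_left, mip_transpose_left, hZ]
  ring

theorem sensing_hessian_sub_population_hessian_eq {B A : ι → Matrix n n ℝ}
    (hA : ∀ i, A i = (1 / 2 : ℝ) • (B i + (B i)ᵀ)) {X : Matrix n n ℝ} (hX : Xᵀ = X)
    (U D : Matrix n p ℝ) :
    (1 / 2) * (∑ i, mip (A i) (U * Dᵀ + D * Uᵀ) ^ 2) +
        mip (∑ i, mip (A i) (U * Uᵀ - X) • A i) (D * Dᵀ) -
        (1 / 2) * frob (U * Dᵀ + D * Uᵀ) ^ 2 - mip (U * Uᵀ - X) (D * Dᵀ) =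
      (1 / 2) * (∑ i, mip (B i) (U * Dᵀ + D * Uᵀ) ^ 2 - frob (U * Dᵀ + D * Uᵀ) ^ 2) +
        (∑ i, mip (B i) (U * Uᵀ) * mip (B i) (D * Dᵀ) - mip (U * Uᵀ) (D * Dᵀ)) -
        (∑ i, mip (B i) X * mip (B i) (D * Dᵀ) - mip X (D * Dᵀ)) := by
  have hS : (U * Dᵀ + D * Uᵀ)ᵀ = U * Dᵀ + D * Uᵀ := by
    rw [transpose_add, transpose_mul, transpose_mul, transpose_transpose, transpose_transpose,
      add_comm]
  have hE : (U * Uᵀ - X)ᵀ = U * Uᵀ - X := by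
    rw [transpose_sub, transpose_mul, transpose_transpose, hX]
  have hDD : (D * Dᵀ)ᵀ = D * Dᵀ := by rw [transpose_mul, transpose_transpose]
  simp only [hA, mip_half_smul_add_transpose hS, mip_half_smul_add_transpose hE,
    mip_half_smul_add_transpose hDD, mip_sum_left, mip_smul_left, mip_sub_left, mip_sub_right,
    sub_mul, Finset.sum_sub_distrib]
  ring

theorem rank_mul_transpose_le_card (P Q : Matrix n p ℝ) : (P * Qᵀ).rank ≤ Fintype.card p :=
  (rank_mul_le_left _ _).trans (rank_le_card_width _)

theorem HasRIP.abs_hessian_sub_le {B A : ι → Matrix n n ℝ} {s : ℕ} {δ : ℝ}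
    (h : HasRIP B s δ) (hδ : 0 ≤ δ) (hA : ∀ i, A i = (1 / 2 : ℝ) • (B i + (B i)ᵀ))
    {X : Matrix n n ℝ} (hX : Xᵀ = X) (hps : 2 * Fintype.card p ≤ s)
    (hXs : X.rank + Fintype.card p ≤ s) (U : Matrix n p ℝ) {D : Matrix n p ℝ} (hD : frob D = 1) :
    |(1 / 2) * (∑ i, mip (A i) (U * Dᵀ + D * Uᵀ) ^ 2) +
        mip (∑ i, mip (A i) (U * Uᵀ - X) • A i) (D * Dᵀ) -
        (1 / 2) * frob (U * Dᵀ + D * Uᵀ) ^ 2 - mip (U * Uᵀ - X) (D * Dᵀ)| ≤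
      δ * (2 * frob U ^ 2 + frob (U * Uᵀ) + frob X) := by
  have hDD : frob (D * Dᵀ) ≤ 1 := by simpa [hD] using frob_mul_transpose_le D D
  have hS : |∑ i, mip (B i) (U * Dᵀ + D * Uᵀ) ^ 2 - frob (U * Dᵀ + D * Uᵀ) ^ 2| ≤
      δ * (4 * frob U ^ 2) := by
    refine (h.abs_sum_sq_sub_frob_sq_le ?_).trans (mul_le_mul_of_nonneg_left ?_ hδ)
    · exact (rank_add_le _ _).trans
        (by linarith [rank_mul_transpose_le_card U D, rank_mul_transpose_le_card D U])
    · calc frob (U * Dᵀ + D * Uᵀ) ^ 2 ≤ (2 * frob U * frob D) ^ 2 := by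
            gcongr
            exacts [frob_nonneg _, frob_mul_transpose_add_le U D]
        _ = 4 * frob U ^ 2 := by rw [hD]; ring
  have hUD := h.abs_sum_mul_sub_mip_le (Z₁ := U * Uᵀ) (Z₂ := D * Dᵀ)
    (by linarith [rank_mul_transpose_le_card U U, rank_mul_transpose_le_card D D])
  have hXD := h.abs_sum_mul_sub_mip_le (Z₁ := X) (Z₂ := D * Dᵀ)
    (by linarith [rank_mul_transpose_le_card D D])
  have hUD' : δ * (frob (U * Uᵀ) * frob (D * Dᵀ)) ≤ δ * frob (U * Uᵀ) :=
    mul_le_mul_of_nonneg_left (mul_le_of_le_one_right (frob_nonneg _) hDD) hδ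
  have hXD' : δ * (frob X * frob (D * Dᵀ)) ≤ δ * frob X :=
    mul_le_mul_of_nonneg_left (mul_le_of_le_one_right (frob_nonneg _) hDD) hδ
  rw [sensing_hessian_sub_population_hessian_eq hA hX, abs_le]
  rw [abs_le] at hS hUD hXD
  constructor <;> linarith [hS.1, hS.2, hUD.1, hUD.2, hXD.1, hXD.2]

end Hessian

theorem stmt_14_general {N r k M : ℕ} (hkr : k ≤ r)
    (W : Matrix (Fin N) (Fin r) ℝ) (lam : Fin r → ℝ)
    (X : Matrix (Fin N) (Fin N) ℝ) (hX : X = W * diagonal lam * Wᵀ)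
    (L : ℝ)
    (B A : Fin M → Matrix (Fin N) (Fin N) ℝ)
    (hA : ∀ m, A m = ((1 : ℝ) / 2) • (B m + (B m)ᵀ))
    (δ η : ℝ) (hη : 0 < η)
    (hRIP : ∀ Z : Matrix (Fin N) (Fin N) ℝ, Z.rank ≤ r + k →
      (1 - δ) * frob Z ^ 2 ≤ ∑ m, mip (B m) Z ^ 2 ∧
      ∑ m, mip (B m) Z ^ 2 ≤ (1 + δ) * frob Z ^ 2)
    (hδ : δ ≤ η / (2 * ((16 / 7) * Real.sqrt k * L + (8 / 7) * L + frob X))) :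
    ∀ U : Matrix (Fin N) (Fin k) ℝ, U.rank = k → frob (U * Uᵀ) ≤ (8 / 7) * L →
      ∀ D : Matrix (Fin N) (Fin k) ℝ, frob D = 1 →
      |(1 / 2) * (∑ m, mip (A m) (U * Dᵀ + D * Uᵀ) ^ 2) +
          mip (∑ m, mip (A m) (U * Uᵀ - X) • A m) (D * Dᵀ) -
          (1 / 2) * frob (U * Dᵀ + D * Uᵀ) ^ 2 - mip (U * Uᵀ - X) (D * Dᵀ)| ≤ η / 2 := by
  intro U _ hUU D hD
  have hRIP : HasRIP B (r + k) δ := hRIP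
  have hXsymm : Xᵀ = X := by simp [hX, transpose_mul, Matrix.mul_assoc]
  have hrankX : X.rank ≤ r := hX ▸ (rank_mul_le_left _ _).trans (rank_le_width _)
  have hDD : D * Dᵀ ≠ 0 := by
    rw [← conjTranspose_eq_transpose_of_trivial, Ne, self_mul_conjTranspose_eq_zero,
      ← frob_eq_zero_iff, hD]
    exact one_ne_zero
  have hδ0 : 0 ≤ δ :=
    hRIP.nonneg ((rank_mul_transpose_le_card D D).trans (by simp)) hDD
  have hU : 2 * frob U ^ 2 ≤ (16 / 7) * √k * L := by
    have := (frob_sq_le_sqrt_card_mul U).trans (mul_le_mul_of_nonneg_left hUU (by positivity))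
    rw [Fintype.card_fin] at this
    linarith
  have hC : 0 ≤ (16 / 7) * √k * L + (8 / 7) * L + frob X := by
    linarith [frob_nonneg (U * Uᵀ), frob_nonneg X, sq_nonneg (frob U)]
  calc _ ≤ δ * (2 * frob U ^ 2 + frob (U * Uᵀ) + frob X) :=
        hRIP.abs_hessian_sub_le hδ0 hA hXsymm (by simp; omega) (by simp [hrankX]) U hD
    _ ≤ δ * ((16 / 7) * √k * L + (8 / 7) * L + frob X) := by gcongr
    _ ≤ η / 2 := by
        rcases hC.eq_or_lt with h0 | h0
        · rw [← h0, mul_zero]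
          positivity
        · rw [le_div_iff₀ (by positivity)] at hδ
          linarith

theorem stmt_14 {N r k M : ℕ} (hk1 : 1 ≤ k) (hkr : k ≤ r)
    (W : Matrix (Fin N) (Fin r) ℝ) (lam : Fin r → ℝ)
    (hW : Wᵀ * W = 1) (hpos : ∀ i, 0 < lam i)
    (hdesc : ∀ i j : Fin r, i ≤ j → lam j ≤ lam i)
    (X : Matrix (Fin N) (Fin N) ℝ) (hX : X = W * diagonal lam * Wᵀ)
    (Ustar : Matrix (Fin N) (Fin k) ℝ)
    (hUstar : Ustar = W.submatrix id (Fin.castLE hkr) *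
      diagonal (fun j : Fin k => Real.sqrt (lam (Fin.castLE hkr j))))
    (L : ℝ) (hL : L = frob (Ustar * Ustarᵀ))
    (B A : Fin M → Matrix (Fin N) (Fin N) ℝ)
    (hA : ∀ m, A m = ((1 : ℝ) / 2) • (B m + (B m)ᵀ))
    (δ η : ℝ) (hη : 0 < η)
    (hRIP : ∀ Z : Matrix (Fin N) (Fin N) ℝ, Z.rank ≤ r + k →
      (1 - δ) * frob Z ^ 2 ≤ ∑ m, mip (B m) Z ^ 2 ∧
      ∑ m, mip (B m) Z ^ 2 ≤ (1 + δ) * frob Z ^ 2)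
    (hδ : δ ≤ η / (2 * ((16 / 7) * Real.sqrt k * L + (8 / 7) * L + frob X))) :
    ∀ U : Matrix (Fin N) (Fin k) ℝ, U.rank = k → frob (U * Uᵀ) ≤ (8 / 7) * L →
      ∀ D : Matrix (Fin N) (Fin k) ℝ, frob D = 1 →
      |(1 / 2) * (∑ m, mip (A m) (U * Dᵀ + D * Uᵀ) ^ 2) +
          mip (∑ m, mip (A m) (U * Uᵀ - X) • A m) (D * Dᵀ) -
          (1 / 2) * frob (U * Dᵀ + D * Uᵀ) ^ 2 - mip (U * Uᵀ - X) (D * Dᵀ)| ≤ η / 2 :=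
  stmt_14_general hkr W lam X hX L B A hA δ η hη hRIP hδ
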